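/- For any words u ≤ w over {a,b} in the subword order, ∑_{u ≤ v ≤ w} (−1)^{|u|+|v|} (v choose u)_n = δ_{u,w}, where (v choose u)_n counts the embeddings of u in v containing R(v). -/

import Mathlib

open List

/-- Words over the alphabet `{a,b}`: `true` encodes `a`, `false` encodes `b`. -/
abbrev Word := List Bool

/-- `s` is an embedding of `u` in `w`: listing the elements of `s` in increasing
order picks out the letters of `u` inside `w`. -/
def IsEmb (u w : Word) (s : Finset ℕ) : Prop :=
  (s.sort (· ≤ ·)).map (fun i => w[i]?) = u.map some

/-- The repetition set `R(w) = {j ≥ 1 : w_j = w_{j-1}}` (0-based positions). -/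
def RepSet (w : Word) : Finset ℕ :=
  (Finset.Ico 1 w.length).filter (fun j => w[j]? = w[j-1]?)

/-- `(v choose u)_n`: number of embeddings of `u` in `v` containing `R(v)`. -/
noncomputable def nCount (u v : Word) : ℕ :=
  Nat.card {s : Finset ℕ // IsEmb u v s ∧ RepSet v ⊆ s}

instance (u w : Word) : DecidablePred (IsEmb u w) := fun s => by
  unfold IsEmb; infer_instance

/-- A computable reformulation of `nCount`. -/
def cnt (u v : Word) : ℕ :=
  ((Finset.range v.length).powerset.filter (fun s => IsEmb u v s ∧ RepSet v ⊆ s)).card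


lemma isEmb_subset {u v : Word} {s : Finset ℕ} (h : IsEmb u v s) :
    s ⊆ Finset.range v.length := by
  intro i hi
  have hi' : i ∈ s.sort (· ≤ ·) := (Finset.mem_sort _).2 hi
  have hmem : v[i]? ∈ (s.sort (· ≤ ·)).map (fun i => v[i]?) :=
    List.mem_map_of_mem hi'
  rw [h] at hmem
  obtain ⟨x, -, hx⟩ := List.mem_map.1 hmem
  rw [Finset.mem_range]
  have := List.getElem?_eq_some_iff.1 hx.symm
  exact this.1

lemma nCount_eq_cnt (u v : Word) : nCount u v = cnt u v := by
  rw [nCount, cnt, ← Nat.card_eq_finsetCard]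
  refine Nat.card_congr (Equiv.subtypeEquivRight fun s => ?_).symm
  simp only [Finset.mem_filter, Finset.mem_powerset]
  exact ⟨fun h => h.2, fun h => ⟨isEmb_subset h.1, h⟩⟩

lemma sort_insert_top {s : Finset ℕ} {n : ℕ} (h : ∀ i ∈ s, i < n) :
    (insert n s).sort (· ≤ ·) = s.sort (· ≤ ·) ++ [n] := by
  have hn : n ∉ s := fun hns => lt_irrefl n (h n hns)
  refine flip (List.Perm.eq_of_pairwise' (r := (· ≤ ·)) (Finset.pairwise_sort _ _)) ?_ ?_
  · calc (insert n s).sort (· ≤ ·) ~ (insert n s).toList := Finset.sort_perm_toList _ _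
      _ ~ n :: s.toList := Finset.toList_insert hn
      _ ~ n :: s.sort (· ≤ ·) := (Finset.sort_perm_toList _ _).symm.cons _
      _ ~ s.sort (· ≤ ·) ++ [n] := (List.perm_append_singleton _ _).symm
  · rw [List.pairwise_append]
    refine ⟨Finset.pairwise_sort _ _, List.pairwise_singleton _ _, ?_⟩
    intro a ha b hb
    rw [List.mem_singleton] at hb; subst hb
    exact le_of_lt (h a ((Finset.mem_sort _).1 ha))

lemma isEmb_append_low {u v : Word} {c : Bool} {s : Finset ℕ}
    (hs : s ⊆ Finset.range v.length) :
    IsEmb u (v ++ [c]) s ↔ IsEmb u v s := by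
  unfold IsEmb
  have key : ∀ i ∈ s.sort (· ≤ ·), (v ++ [c])[i]? = v[i]? := by
    intro i hi
    have hlt : i < v.length := Finset.mem_range.1 (hs ((Finset.mem_sort _).1 hi))
    rw [List.getElem?_append, if_pos hlt]
  rw [List.map_congr_left key]

lemma isEmb_insert {u v : Word} {c : Bool} {s : Finset ℕ}
    (hs : s ⊆ Finset.range v.length) (h : IsEmb u v s) :
    IsEmb (u ++ [c]) (v ++ [c]) (insert v.length s) := by
  unfold IsEmb at h ⊢
  have hlt : ∀ i ∈ s, i < v.length := fun i hi => Finset.mem_range.1 (hs hi)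
  rw [sort_insert_top hlt, List.map_append, List.map_append]
  congr 1
  · rw [← h]
    refine List.map_congr_left fun i hi => ?_
    have : i < v.length := Finset.mem_range.1 (hs ((Finset.mem_sort _).1 hi))
    rw [List.getElem?_append, if_pos this]
  · simp [List.getElem?_concat_length]

lemma isEmb_extract {u v : Word} {c : Bool} {s : Finset ℕ}
    (hs : s ⊆ Finset.range (v.length + 1)) (hn : v.length ∈ s)
    (h : IsEmb u (v ++ [c]) s) :
    u.getLast? = some c ∧ IsEmb u.dropLast v (s.erase v.length) := by
  set n := v.length with hn'
  have hsub : s.erase n ⊆ Finset.range n := by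
    intro i hi
    rcases Finset.mem_erase.1 hi with ⟨hne, hi2⟩
    have := Finset.mem_range.1 (hs hi2)
    exact Finset.mem_range.2 (by omega)
  have hlt : ∀ i ∈ s.erase n, i < n := fun i hi => Finset.mem_range.1 (hsub hi)
  have hsort : s.sort (· ≤ ·) = (s.erase n).sort (· ≤ ·) ++ [n] := by
    conv_lhs => rw [← Finset.insert_erase hn]
    exact sort_insert_top hlt
  unfold IsEmb at h
  rw [hsort, List.map_append] at h
  have hfn : ((v ++ [c])[n]? ) = some c := List.getElem?_concat_length
  simp only [List.map_singleton, hfn] at h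
  -- h : map f (sort erase) ++ [some c] = u.map some
  have hlast : u.getLast? = some c := by
    have := congrArg List.getLast? h
    rw [List.getLast?_concat] at this
    rw [List.getLast?_map] at this
    cases hu : u.getLast? with
    | none => rw [hu] at this; simp at this
    | some a => rw [hu] at this; simp at this; rw [this]
  refine ⟨hlast, ?_⟩
  have hdrop := congrArg List.dropLast h
  rw [List.dropLast_concat, ← List.map_dropLast] at hdrop
  have : IsEmb u.dropLast (v ++ [c]) (s.erase n) := hdrop
  exact (isEmb_append_low hsub).1 this

lemma repSet_lt {w : Word} {j : ℕ} (h : j ∈ RepSet w) : j < w.length := by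
  have := (Finset.mem_filter.1 h).1
  exact (Finset.mem_Ico.1 this).2

lemma mem_repSet {w : Word} {j : ℕ} :
    j ∈ RepSet w ↔ 1 ≤ j ∧ j < w.length ∧ w[j]? = w[j-1]? := by
  simp [RepSet, and_assoc]

lemma repSet_concat (v : Word) (c : Bool) :
    RepSet (v ++ [c]) =
      if v.getLast? = some c then insert v.length (RepSet v) else RepSet v := by
  ext j
  rw [mem_repSet]
  simp only [List.length_append, List.length_singleton]
  by_cases hj : j = v.length
  · subst hj
    rcases Nat.eq_zero_or_pos v.length with h0 | h0
    · have hv : v = [] := List.length_eq_zero_iff.1 h0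
      subst hv
      simp [RepSet]
    · have hne : v ≠ [] := fun h => by simp [h] at h0
      have h1 : (v ++ [c])[v.length]? = some c := List.getElem?_concat_length
      have h2 : (v ++ [c])[v.length - 1]? = v[v.length - 1]? := by
        rw [List.getElem?_append, if_pos (by omega)]
      have h3 : v[v.length - 1]? = v.getLast? := (List.getLast?_eq_getElem? (l := v)).symm
      rw [h1, h2, h3]
      constructor
      · rintro ⟨-, -, hc⟩
        rw [if_pos hc.symm]
        exact Finset.mem_insert_self _ _
      · intro hmem
        by_cases hc : v.getLast? = some c
        · exact ⟨by omega, by omega, hc.symm⟩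
        · rw [if_neg hc] at hmem
          exact absurd (repSet_lt hmem) (lt_irrefl _)
  · have hiff : (1 ≤ j ∧ j < v.length + 1 ∧ (v ++ [c])[j]? = (v ++ [c])[j-1]?) ↔
        j ∈ RepSet v := by
      constructor
      · rintro ⟨h1, h2, h3⟩
        have hjlt : j < v.length := by omega
        rw [List.getElem?_append, if_pos hjlt, List.getElem?_append,
          if_pos (by omega)] at h3
        exact mem_repSet.2 ⟨h1, hjlt, h3⟩
      · intro hmem
        obtain ⟨h1, h2, h3⟩ := mem_repSet.1 hmem
        refine ⟨h1, by omega, ?_⟩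
        rw [List.getElem?_append, if_pos h2, List.getElem?_append, if_pos (by omega)]
        exact h3
    constructor
    · rintro ⟨h1, h2, h3⟩
      have hmem := hiff.1 ⟨h1, h2, h3⟩
      split
      · exact Finset.mem_insert_of_mem hmem
      · exact hmem
    · intro hmem
      have hv : j ∈ RepSet v := by
        by_cases hc : v.getLast? = some c
        · rw [if_pos hc, Finset.mem_insert] at hmem
          tauto
        · rwa [if_neg hc] at hmem
      exact hiff.2 hv

-- IsEmb implies sublist
lemma IsEmb.sublist {v u : Word} {s : Finset ℕ} (h : IsEmb u v s) : u <+ v := by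
  induction v using List.reverseRecOn generalizing u s with
  | nil =>
    have hs : s = ∅ := by
      have := isEmb_subset h
      simpa [Finset.subset_empty] using this
    subst hs
    unfold IsEmb at h
    simp only [Finset.sort_empty, List.map_nil] at h
    have : u = [] := by
      cases u with
      | nil => rfl
      | cons a l => simp at h
    simp [this]
  | append_singleton v c IH =>
    have hs : s ⊆ Finset.range (v.length + 1) := by
      have := isEmb_subset h
      simpa using this
    by_cases hn : v.length ∈ s
    · obtain ⟨hlast, hemb⟩ := isEmb_extract hs hn h
      obtain ⟨ys, hys⟩ := List.getLast?_eq_some_iff.1 hlast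
      have hd : u.dropLast = ys := by rw [hys, List.dropLast_concat]
      have h1 : u.dropLast <+ v := IH hemb
      calc u = u.dropLast ++ [c] := by rw [hd, ← hys]
        _ <+ v ++ [c] := h1.append (List.Sublist.refl [c])
    · have hs' : s ⊆ Finset.range v.length := by
        intro i hi
        have := Finset.mem_range.1 (hs hi)
        have hne : i ≠ v.length := fun he => hn (he ▸ hi)
        exact Finset.mem_range.2 (by omega)
      have := IH ((isEmb_append_low hs').1 h)
      exact this.trans (List.sublist_append_left _ _)

lemma cnt_not_sublist {u v : Word} (h : ¬ u <+ v) : cnt u v = 0 := by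
  rw [cnt, Finset.card_eq_zero, Finset.filter_eq_empty_iff]
  rintro s - ⟨hemb, -⟩
  exact h hemb.sublist

lemma cnt_big {u v : Word} {N : ℕ} (hN : v.length ≤ N) :
    ((Finset.range N).powerset.filter (fun s => IsEmb u v s ∧ RepSet v ⊆ s)).card
      = cnt u v := by
  rw [cnt]
  congr 1
  ext s
  simp only [Finset.mem_filter, Finset.mem_powerset]
  constructor
  · rintro ⟨-, h⟩
    exact ⟨isEmb_subset h.1, h⟩
  · rintro ⟨-, h⟩
    exact ⟨(isEmb_subset h.1).trans (by intro i hi; simp at hi ⊢; omega), h⟩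

lemma cnt_concat_rep {u v : Word} {c : Bool} (hv : v.getLast? = some c) :
    cnt (u ++ [c]) (v ++ [c]) = cnt u v := by
  have hrep : RepSet (v ++ [c]) = insert v.length (RepSet v) := by
    rw [repSet_concat, if_pos hv]
  rw [cnt, cnt]
  have hlen : (v ++ [c]).length = v.length + 1 := by simp
  refine Finset.card_nbij' (fun s => s.erase v.length) (fun t => insert v.length t)
    ?_ ?_ ?_ ?_
  · rintro s hs
    rw [Finset.mem_coe, Finset.mem_filter, Finset.mem_powerset, hlen] at hs
    obtain ⟨hsub, hemb, hR⟩ := hs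
    have hn : v.length ∈ s := hR (hrep ▸ Finset.mem_insert_self _ _)
    obtain ⟨-, hemb'⟩ := isEmb_extract hsub hn hemb
    rw [List.dropLast_concat] at hemb'
    rw [Finset.mem_coe, Finset.mem_filter, Finset.mem_powerset]
    refine ⟨isEmb_subset hemb', hemb', ?_⟩
    intro j hj
    refine Finset.mem_erase.2 ⟨fun he => ?_, hR (hrep ▸ Finset.mem_insert_of_mem hj)⟩
    exact absurd (repSet_lt hj) (by omega)
  · rintro t ht
    rw [Finset.mem_coe, Finset.mem_filter, Finset.mem_powerset] at ht
    obtain ⟨hsub, hemb, hR⟩ := ht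
    rw [Finset.mem_coe, Finset.mem_filter, Finset.mem_powerset, hlen]
    refine ⟨?_, isEmb_insert hsub hemb, ?_⟩
    · intro i hi
      rcases Finset.mem_insert.1 hi with rfl | hi
      · simp
      · have := Finset.mem_range.1 (hsub hi); exact Finset.mem_range.2 (by omega)
    · rw [hrep]
      exact Finset.insert_subset_insert _ hR
  · rintro s hs
    rw [Finset.mem_coe, Finset.mem_filter, Finset.mem_powerset, hlen] at hs
    obtain ⟨hsub, hemb, hR⟩ := hs
    exact Finset.insert_erase (hR (hrep ▸ Finset.mem_insert_self _ _))
  · rintro t ht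
    rw [Finset.mem_coe, Finset.mem_filter, Finset.mem_powerset] at ht
    obtain ⟨hsub, -, -⟩ := ht
    exact Finset.erase_insert (fun hn => by have := Finset.mem_range.1 (hsub hn); omega)

lemma cnt_concat_rep_ne {u v : Word} {c : Bool} (hv : v.getLast? = some c)
    (hu : u.getLast? ≠ some c) : cnt u (v ++ [c]) = 0 := by
  rw [cnt, Finset.card_eq_zero, Finset.filter_eq_empty_iff]
  rintro s hs ⟨hemb, hR⟩
  rw [Finset.mem_powerset] at hs
  have hlen : (v ++ [c]).length = v.length + 1 := by simp
  rw [hlen] at hs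
  have hn : v.length ∈ s := hR ((repSet_concat v c) ▸ by
    rw [if_pos hv]; exact Finset.mem_insert_self _ _)
  exact hu (isEmb_extract hs hn hemb).1

lemma cnt_nil (u : Word) : cnt u [] = if u = [] then 1 else 0 := by
  rw [cnt]
  simp only [List.length_nil, Finset.range_zero, Finset.powerset_empty]
  rw [Finset.filter_singleton]
  have hrep : RepSet ([] : Word) = ∅ := by simp [RepSet]
  have hemb : IsEmb u [] ∅ ↔ u = [] := by
    unfold IsEmb
    simp only [Finset.sort_empty, List.map_nil]
    constructor
    · intro h; cases u with
      | nil => rfl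
      | cons a l => simp at h
    · rintro rfl; rfl
  by_cases hu : u = []
  · rw [if_pos ⟨hemb.2 hu, hrep ▸ Finset.empty_subset _⟩, if_pos hu, Finset.card_singleton]
  · rw [if_neg (fun hc => hu (hemb.1 hc.1)), if_neg hu, Finset.card_empty]

lemma cnt_concat_norep {u v : Word} {c : Bool} (hv : v.getLast? ≠ some c) :
    cnt u (v ++ [c]) =
      cnt u v + (if u.getLast? = some c then cnt u.dropLast v else 0) := by
  have hrep : RepSet (v ++ [c]) = RepSet v := by rw [repSet_concat, if_neg hv]
  have hlen : (v ++ [c]).length = v.length + 1 := by simp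
  rw [cnt, hlen]
  set F := (Finset.range (v.length + 1)).powerset.filter
    (fun s => IsEmb u (v ++ [c]) s ∧ RepSet (v ++ [c]) ⊆ s) with hF
  rw [← Finset.card_filter_add_card_filter_not (s := F)
    (p := fun s => v.length ∈ s)]
  rw [add_comm (cnt u v)]
  congr 1
  -- part with n ∈ s
  · by_cases hu : u.getLast? = some c
    · rw [if_pos hu, cnt]
      obtain ⟨ys, hys⟩ := List.getLast?_eq_some_iff.1 hu
      refine Finset.card_nbij' (fun s => s.erase v.length) (fun t => insert v.length t)
        ?_ ?_ ?_ ?_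
      · rintro s hs
        rw [Finset.mem_coe, Finset.mem_filter, hF, Finset.mem_filter, Finset.mem_powerset] at hs
        obtain ⟨⟨hsub, hemb, hR⟩, hn⟩ := hs
        obtain ⟨-, hemb'⟩ := isEmb_extract hsub hn hemb
        rw [Finset.mem_coe, Finset.mem_filter, Finset.mem_powerset]
        refine ⟨isEmb_subset hemb', hemb', ?_⟩
        intro j hj
        refine Finset.mem_erase.2 ⟨fun he => absurd (repSet_lt hj) (by omega), ?_⟩
        exact hR (hrep ▸ hj)
      · rintro t ht
        rw [Finset.mem_coe, Finset.mem_filter, Finset.mem_powerset] at ht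
        obtain ⟨hsub, hemb, hR⟩ := ht
        rw [Finset.mem_coe, Finset.mem_filter, hF, Finset.mem_filter, Finset.mem_powerset]
        have hins := isEmb_insert (c := c) hsub hemb
        refine ⟨⟨?_, ?_, ?_⟩, Finset.mem_insert_self _ _⟩
        · intro i hi
          rcases Finset.mem_insert.1 hi with rfl | hi
          · simp
          · have := Finset.mem_range.1 (hsub hi); exact Finset.mem_range.2 (by omega)
        · have : u.dropLast ++ [c] = u := by rw [hys, List.dropLast_concat]
          rwa [this] at hins
        · rw [hrep]
          exact hR.trans (Finset.subset_insert _ _)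
      · rintro s hs
        rw [Finset.mem_coe, Finset.mem_filter] at hs
        exact Finset.insert_erase hs.2
      · rintro t ht
        rw [Finset.mem_coe, Finset.mem_filter, Finset.mem_powerset] at ht
        exact Finset.erase_insert
          (fun hn => by have := Finset.mem_range.1 (ht.1 hn); omega)
    · rw [if_neg hu, Finset.card_eq_zero, Finset.filter_eq_empty_iff]
      rintro s hs hn
      rw [hF, Finset.mem_filter, Finset.mem_powerset] at hs
      exact hu (isEmb_extract hs.1 hn hs.2.1).1
  -- part with n ∉ s
  · rw [cnt]
    congr 1
    ext s
    rw [Finset.mem_filter, hF, Finset.mem_filter, Finset.mem_powerset,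
      Finset.mem_filter, Finset.mem_powerset]
    constructor
    · rintro ⟨⟨hsub, hemb, hR⟩, hn⟩
      have hsub' : s ⊆ Finset.range v.length := by
        intro i hi
        have := Finset.mem_range.1 (hsub hi)
        have : i ≠ v.length := fun he => hn (he ▸ hi)
        exact Finset.mem_range.2 (by omega)
      exact ⟨hsub', (isEmb_append_low hsub').1 hemb, hrep ▸ hR⟩
    · rintro ⟨hsub, hemb, hR⟩
      have hn : v.length ∉ s := fun hn => by have := Finset.mem_range.1 (hsub hn); omega
      refine ⟨⟨hsub.trans ?_, (isEmb_append_low hsub).2 hemb, hrep ▸ hR⟩, hn⟩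
      intro i hi; simp at hi ⊢; omega

lemma sublist_concat_of_ne {u v : Word} {c : Bool} (hu : u.getLast? ≠ some c) :
    u <+ v ++ [c] ↔ u <+ v := by
  constructor
  · intro h
    rcases List.sublist_append_iff.1 h with ⟨l₁, l₂, rfl, h₁, h₂⟩
    rcases List.sublist_singleton.1 h₂ with rfl | rfl
    · simpa using h₁
    · exact absurd (List.getLast?_concat) hu
  · exact fun h => h.trans (List.sublist_append_left _ _)

lemma D_concat (w : Word) (c : Bool) :
    (w ++ [c]).sublists.toFinset =
      (w.sublists.toFinset.filter (fun v => ¬ v.getLast? = some c)) ∪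
      w.sublists.toFinset.image (· ++ [c]) := by
  ext v
  simp only [List.mem_toFinset, List.mem_sublists, Finset.mem_union, Finset.mem_filter,
    Finset.mem_image]
  constructor
  · intro hv
    by_cases hc : v.getLast? = some c
    · obtain ⟨ys, rfl⟩ := List.getLast?_eq_some_iff.1 hc
      right
      exact ⟨ys, (List.append_sublist_append_right _).1 hv, rfl⟩
    · left
      exact ⟨(sublist_concat_of_ne hc).1 hv, hc⟩
  · rintro (⟨h, -⟩ | ⟨t, ht, rfl⟩)
    · exact h.trans (List.sublist_append_left _ _)
    · exact (List.append_sublist_append_right _).2 ht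

lemma D_disj (w : Word) (c : Bool) :
    Disjoint (w.sublists.toFinset.filter (fun v => ¬ v.getLast? = some c))
      (w.sublists.toFinset.image (· ++ [c])) := by
  rw [Finset.disjoint_left]
  rintro v hv hv'
  obtain ⟨t, -, rfl⟩ := Finset.mem_image.1 hv'
  exact (Finset.mem_filter.1 hv).2 (List.getLast?_concat)

/-- The defining Möbius identity for `μ(u,v) = (-1)^{|u|+|v|}(v choose u)_n`:
for `u ≤ w`, `∑_{u ≤ v ≤ w} (-1)^{|u|+|v|} (v choose u)_n = δ_{u,w}`. -/
theorem mobius_delta_identity (u w : Word) (h : u <+ w) :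
    ∑ v ∈ w.sublists.toFinset.filter (fun v => u <+ v),
      (-1 : ℤ) ^ (u.length + v.length) * (nCount u v : ℤ) =
      (if u = w then 1 else 0) := by
  induction w using List.reverseRecOn generalizing u with
  | nil =>
    have hu := List.sublist_nil.1 h
    subst hu
    simp [List.sublists_nil, Finset.filter_singleton, nCount_eq_cnt, cnt_nil]
  | append_singleton w c IH =>
    simp only [nCount_eq_cnt] at *
    rw [D_concat w c, Finset.filter_union,
      Finset.sum_union (Finset.disjoint_filter_filter (D_disj w c)),
      Finset.filter_filter, Finset.sum_filter, Finset.sum_filter,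
      Finset.sum_image (fun x _ y _ hxy => by simpa using hxy),
      ← Finset.sum_add_distrib]
    by_cases hc : u.getLast? = some c
    · obtain ⟨u'', rfl⟩ := List.getLast?_eq_some_iff.1 hc
      have hsub : u'' <+ w := (List.append_sublist_append_right _).1 h
      have key : ∀ v : Word,
          ((if ¬v.getLast? = some c ∧ u'' ++ [c] <+ v then
              (-1 : ℤ) ^ ((u'' ++ [c]).length + v.length) * (cnt (u'' ++ [c]) v : ℤ)
            else 0) +
          (if u'' ++ [c] <+ v ++ [c] then
              (-1 : ℤ) ^ ((u'' ++ [c]).length + (v ++ [c]).length) *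
                (cnt (u'' ++ [c]) (v ++ [c]) : ℤ)
            else 0)) =
          (if u'' <+ v then (-1 : ℤ) ^ (u''.length + v.length) * (cnt u'' v : ℤ)
            else 0) := by
        intro v
        by_cases h1 : u'' <+ v
        · rw [if_pos ((List.append_sublist_append_right _).2 h1), if_pos h1]
          by_cases h2 : v.getLast? = some c
          · rw [if_neg (fun hp => hp.1 h2), cnt_concat_rep h2, zero_add]
            simp only [List.length_append, List.length_singleton]
            ring
          · rw [cnt_concat_norep h2]
            rw [if_pos (List.getLast?_concat), List.dropLast_concat]
            by_cases h3 : u'' ++ [c] <+ v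
            · rw [if_pos ⟨h2, h3⟩]
              push_cast
              simp only [List.length_append, List.length_singleton]
              ring
            · rw [if_neg (fun hp => h3 hp.2), cnt_not_sublist h3, zero_add]
              push_cast
              simp only [List.length_append, List.length_singleton]
              ring
        · rw [if_neg h1, if_neg (fun hp => h1 ((List.sublist_append_left _ _).trans hp.2)),
            if_neg (fun hx => h1 ((List.append_sublist_append_right _).1 hx)), add_zero]
      rw [Finset.sum_congr rfl (fun v _ => key v), ← Finset.sum_filter, IH u'' hsub]
      simp only [List.append_left_inj]
    · have key : ∀ v : Word,
          ((if ¬v.getLast? = some c ∧ u <+ v then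
              (-1 : ℤ) ^ (u.length + v.length) * (cnt u v : ℤ) else 0) +
          (if u <+ v ++ [c] then
              (-1 : ℤ) ^ (u.length + (v ++ [c]).length) * (cnt u (v ++ [c]) : ℤ)
            else 0)) = 0 := by
        intro v
        by_cases h1 : u <+ v
        · rw [if_pos ((sublist_concat_of_ne hc).2 h1)]
          by_cases h2 : v.getLast? = some c
          · rw [if_neg (fun hp => hp.1 h2), cnt_concat_rep_ne h2 hc]
            simp
          · rw [if_pos ⟨h2, h1⟩, cnt_concat_norep h2, if_neg hc]
            push_cast
            simp only [List.length_append, List.length_singleton]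
            ring
        · rw [if_neg (fun hp => h1 hp.2),
            if_neg (fun hx => h1 ((sublist_concat_of_ne hc).1 hx)), add_zero]
      rw [Finset.sum_congr rfl (fun v _ => key v), Finset.sum_const_zero]
      rw [if_neg (fun he : u = w ++ [c] => hc (he ▸ List.getLast?_concat (l := w)))]
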